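/- Let ρ₀, ρ₁ be density matrices with ‖ρ₀−ρ₁‖₁ ≥ t, and let P be a projection of rank D with tr(ρᵢP) ≥ 1 − c² for i = 0,1, where t = 4c + r, r > 0. Then ‖ρ₀ − ρ₁‖₂² ≥ r²/D. -/

import Mathlib

/-!
Let `W` be the unitary sign matrix of the Hermitian matrix `Δ = ρ₀ - ρ₁`, so that `|Δ| = Δ W`
and `‖Δ‖₁ = Re tr (Δ W)`. Cauchy–Schwarz for the `ρᵢ`-weighted inner product `tr (y ρᵢ xᴴ)`
gives the gentle measurement bound `|tr ((ρᵢ - PρᵢP) W)| ≤ 2c`, hence `r ≤ |tr (Δ · PWP)|`.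
Cauchy–Schwarz for the Frobenius inner product bounds this by `‖Δ‖₂ ‖PWP‖₂`, and
`‖PWP‖₂² ≤ tr P = D` because `P = (PWP)ᴴ(PWP) + ((1 - P)WP)ᴴ((1 - P)WP)`.
-/

open Matrix
open scoped ComplexOrder

/-- A density matrix: positive semidefinite with unit trace. -/
def IsDensityMatrix {n : ℕ} (ρ : Matrix (Fin n) (Fin n) ℂ) : Prop :=
  ρ.PosSemidef ∧ ρ.trace = 1

/-- The positive semidefinite square root of a positive semidefinite matrix
(restored with its former Mathlib definition, since removed from Mathlib). -/
noncomputable def Matrix.PosSemidef.sqrt {n 𝕜 : Type*} [Fintype n] [DecidableEq n] [RCLike 𝕜]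
    {A : Matrix n n 𝕜} (hA : A.PosSemidef) : Matrix n n 𝕜 :=
  hA.1.eigenvectorUnitary.1 * diagonal ((↑) ∘ (√·) ∘ hA.1.eigenvalues) *
  (star hA.1.eigenvectorUnitary : Matrix n n 𝕜)

/-- The trace norm of a (square complex) matrix: `tr √(AᴴA)`. -/
noncomputable def traceNorm {n : ℕ} (A : Matrix (Fin n) (Fin n) ℂ) : ℝ :=
  ((Matrix.posSemidef_conjTranspose_mul_self A).sqrt).trace.re

open scoped MatrixOrder

lemma sq_div_le_of_le_sqrt_mul_sqrt {r x y : ℝ} (hr : 0 < r) (h : r ≤ √x * √y) :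
    r ^ 2 / y ≤ x := by
  have hx : 0 < x := by
    by_contra! hx
    rw [Real.sqrt_eq_zero'.mpr hx, zero_mul] at h
    linarith
  have hy : 0 < y := by
    by_contra! hy
    rw [Real.sqrt_eq_zero'.mpr hy, mul_zero] at h
    linarith
  rw [div_le_iff₀ hy, ← Real.sq_sqrt hx.le, ← Real.sq_sqrt hy.le, ← mul_pow]
  exact pow_le_pow_left₀ hr.le h 2

lemma IsStarProjection.star_mul_add_star_mul {R : Type*} [Ring R] [StarRing R] {p w : R}
    (hp : IsStarProjection p) (hw : star w * w = 1) :
    star (p * w * p) * (p * w * p) + star ((1 - p) * w * p) * ((1 - p) * w * p) = p := by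
  simp only [star_mul, star_sub, star_one, hp.isSelfAdjoint.star_eq]
  calc _ = p * star w * (p * p) * w * p + p * star w * ((1 - p) * (1 - p)) * w * p := by
        noncomm_ring
    _ = p * (star w * w) * p := by
      rw [hp.isIdempotentElem.eq, hp.one_sub.isIdempotentElem.eq]
      noncomm_ring
    _ = p := by rw [hw, mul_one, hp.isIdempotentElem.eq]

namespace Matrix

variable {m 𝕜 : Type*} [Fintype m] [RCLike 𝕜]

lemma trace_mul_mul_conjTranspose {R : Type*} [CommSemiring R] [StarRing R]
    (x M : Matrix m m R) : (x * M * xᴴ).trace = (M * (xᴴ * x)).trace := by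
  rw [trace_mul_cycle, trace_mul_comm]

lemma trace_eq_rank_of_isIdempotentElem [DecidableEq m] {K : Type*} [Field K]
    {P : Matrix m m K} (hP : IsIdempotentElem P) : P.trace = P.rank := by
  rw [← trace_toLin'_eq, rank]
  exact (LinearMap.IsIdempotentElem.isProj_range _ (hP.map toLinAlgEquiv')).trace

lemma PosSemidef.sqrt_eq_cfcSqrt [DecidableEq m] {A : Matrix m m 𝕜} (hA : A.PosSemidef) :
    hA.sqrt = CFC.sqrt A := by
  rw [CFC.sqrt_eq_real_sqrt A hA.nonneg, cfcₙ_eq_cfc, hA.1.cfc_eq, IsHermitian.cfc,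
    Unitary.conjStarAlgAut_apply]
  rfl

lemma IsHermitian.exists_mem_unitary_abs_eq_mul [DecidableEq m] {A : Matrix m m 𝕜}
    (hA : A.IsHermitian) : ∃ W ∈ unitary (Matrix m m 𝕜), CFC.abs A = A * W := by
  have hsa : IsSelfAdjoint A := hA
  -- `sgn 0 = 1` rather than `0`, so that `cfc sgn A` is unitary
  set sgn : ℝ → ℝ := fun x => if 0 ≤ x then 1 else -1
  have hcont : ContinuousOn sgn (spectrum ℝ A) := A.finite_real_spectrum.continuousOn _
  refine ⟨cfc sgn A, (cfc_unitary_iff sgn A).2 fun x _ => ?_, ?_⟩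
  · simp only [sgn]
    split_ifs <;> norm_num
  · conv_rhs => arg 1; rw [← cfc_id' ℝ A]
    rw [CFC.abs_eq_cfc_norm A, ← cfc_mul ..]
    refine cfc_congr fun x _ => ?_
    simp only [sgn, Real.norm_eq_abs]
    split_ifs with h
    · simp [abs_of_nonneg h]
    · simp [abs_of_neg (not_le.mp h)]

lemma PosSemidef.norm_trace_mul_mul_conjTranspose_le {M : Matrix m m 𝕜} (hM : M.PosSemidef)
    (x y : Matrix m m 𝕜) :
    ‖(y * M * xᴴ).trace‖ ≤
      √(RCLike.re (x * M * xᴴ).trace) * √(RCLike.re (y * M * yᴴ).trace) := by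
  -- the inner product `⟪x, y⟫ = tr (y M xᴴ)` induced by `M`
  let := M.toMatrixSeminormedAddCommGroup hM
  let := M.toMatrixInnerProductSpace hM
  exact norm_inner_le_norm (𝕜 := 𝕜) x y

lemma re_trace_compression_conjTranspose_mul_self_le [DecidableEq m] {P W : Matrix m m ℂ}
    (hP : IsStarProjection P) (hW : W ∈ unitary (Matrix m m ℂ)) :
    ((P * W * P)ᴴ * (P * W * P)).trace.re ≤ P.trace.re := by
  have hsum := congrArg (fun A => A.trace.re)
    (hP.star_mul_add_star_mul (Unitary.star_mul_self_of_mem hW))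
  have hnonneg := (posSemidef_conjTranspose_mul_self ((1 - P) * W * P)).trace_nonneg
  simp only [trace_add, Complex.add_re, star_eq_conjTranspose] at hsum
  linarith [(Complex.nonneg_iff.mp hnonneg).1]

theorem norm_trace_sub_compression_mul_le [DecidableEq m] {ρ P W : Matrix m m ℂ}
    (hρ : ρ.PosSemidef) (hρ1 : ρ.trace = 1) (hP : IsStarProjection P)
    (hW : W ∈ unitary (Matrix m m ℂ)) {c : ℝ} (hc : 0 ≤ c)
    (hρP : 1 - c ^ 2 ≤ (ρ * P).trace.re) :
    ‖((ρ - P * ρ * P) * W).trace‖ ≤ 2 * c := by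
  set Q := 1 - P with hQdef
  have hQ : IsStarProjection Q := hP.one_sub
  have hproj {R : Matrix m m ℂ} (hR : IsStarProjection R) : Rᴴ * R = R := by
    rw [← star_eq_conjTranspose, hR.isSelfAdjoint.star_eq, hR.isIdempotentElem.eq]
  have hWW : W * Wᴴ = 1 := Unitary.mul_star_self_of_mem hW
  have hρQ : (ρ * Q).trace.re ≤ c ^ 2 := by
    rw [hQdef, mul_sub, mul_one, trace_sub, hρ1, Complex.sub_re, Complex.one_re]
    linarith
  have hρP1 : (ρ * P).trace.re ≤ 1 := by
    have := (Complex.nonneg_iff.mp (hρ.mul_mul_conjTranspose_same Q).trace_nonneg).1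
    rw [trace_mul_mul_conjTranspose, hproj hQ, hQdef, mul_sub, mul_one, trace_sub, hρ1,
      Complex.sub_re, Complex.one_re] at this
    linarith
  -- `ρ - PρP = Qρ + PρQ`, each term written as `tr (y ρ xᴴ)` for Cauchy–Schwarz
  have hsplit : ((ρ - P * ρ * P) * W).trace
      = (Q * ρ * Wᴴᴴ).trace + (P * ρ * (Wᴴ * Q)ᴴ).trace := by
    have hQH : Qᴴ = Q := hQ.isSelfAdjoint
    rw [← trace_add, conjTranspose_conjTranspose, conjTranspose_mul, conjTranspose_conjTranspose,
      hQH, hQdef]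
    noncomm_ring
  have h₁ : ‖(Q * ρ * Wᴴᴴ).trace‖ ≤ c := by
    refine (hρ.norm_trace_mul_mul_conjTranspose_le _ _).trans ?_
    rw [trace_mul_mul_conjTranspose, trace_mul_mul_conjTranspose, conjTranspose_conjTranspose,
      hWW, mul_one, hρ1, hproj hQ]
    simpa using Real.sqrt_le_sqrt hρQ |>.trans_eq (Real.sqrt_sq hc)
  have h₂ : ‖(P * ρ * (Wᴴ * Q)ᴴ).trace‖ ≤ c := by
    refine (hρ.norm_trace_mul_mul_conjTranspose_le _ _).trans ?_
    rw [trace_mul_mul_conjTranspose, trace_mul_mul_conjTranspose, conjTranspose_mul,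
      conjTranspose_conjTranspose, Matrix.mul_assoc, ← Matrix.mul_assoc W, hWW, Matrix.one_mul,
      hproj hQ, hproj hP]
    simpa using mul_le_mul (Real.sqrt_le_sqrt hρQ |>.trans_eq (Real.sqrt_sq hc))
      (Real.sqrt_le_one.mpr hρP1) (Real.sqrt_nonneg _) hc
  rw [hsplit, two_mul]
  exact norm_add_le_of_le h₁ h₂

end Matrix

lemma traceNorm_eq_re_trace_abs {n : ℕ} (A : Matrix (Fin n) (Fin n) ℂ) :
    traceNorm A = (CFC.abs A).trace.re := by
  rw [traceNorm, PosSemidef.sqrt_eq_cfcSqrt]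
  rfl

/-- If `‖ρ₀−ρ₁‖₁ ≥ t = 4c + r` and `P` is a rank-`D` projection with
`tr(ρᵢP) ≥ 1 − c²`, then `‖ρ₀−ρ₁‖₂² ≥ r²/D`. -/
theorem frobenius_lower_bound {n D : ℕ} (ρ₀ ρ₁ P : Matrix (Fin n) (Fin n) ℂ)
    (h₀ : IsDensityMatrix ρ₀) (h₁ : IsDensityMatrix ρ₁)
    (hP : P.IsHermitian) (hProj : P * P = P) (hrank : P.rank = D)
    (t c r : ℝ) (hc : 0 ≤ c) (hr : 0 < r) (ht : t = 4 * c + r)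
    (htrace : traceNorm (ρ₀ - ρ₁) ≥ t)
    (h0P : (ρ₀ * P).trace.re ≥ 1 - c ^ 2) (h1P : (ρ₁ * P).trace.re ≥ 1 - c ^ 2) :
    ((ρ₀ - ρ₁)ᴴ * (ρ₀ - ρ₁)).trace.re ≥ r ^ 2 / D := by
  set Δ := ρ₀ - ρ₁ with hΔ
  have hPstar : IsStarProjection P := ⟨hProj, hP⟩
  obtain ⟨W, hW, habs⟩ := (h₀.1.1.sub h₁.1.1).exists_mem_unitary_abs_eq_mul
  have hsplit : (Δ * W).trace = (P * W * P * Δ).trace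
      + ((ρ₀ - P * ρ₀ * P) * W).trace - ((ρ₁ - P * ρ₁ * P) * W).trace := by
    rw [Matrix.mul_assoc (P * W), trace_mul_comm (P * W), ← Matrix.mul_assoc, ← trace_add,
      ← trace_sub, hΔ]
    congr 1
    noncomm_ring
  have hcompressed : r ≤ ‖(P * W * P * Δ).trace‖ := by
    have htW : t ≤ ‖(Δ * W).trace‖ := by
      rw [ge_iff_le, traceNorm_eq_re_trace_abs, habs] at htrace
      exact htrace.trans (Complex.re_le_norm _)
    rw [hsplit] at htW
    have := norm_sub_le_of_le (norm_add_le_of_le (le_refl ‖(P * W * P * Δ).trace‖)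
      (norm_trace_sub_compression_mul_le h₀.1 h₀.2 hPstar hW hc h0P))
      (norm_trace_sub_compression_mul_le h₁.1 h₁.2 hPstar hW hc h1P)
    linarith
  have hD : (P * W * P * (P * W * P)ᴴ).trace.re ≤ D := by
    rw [trace_mul_comm, ← hrank, ← Complex.natCast_re,
      ← trace_eq_rank_of_isIdempotentElem hProj]
    exact re_trace_compression_conjTranspose_mul_self_le hPstar hW
  have hCS : r ≤ √(Δᴴ * Δ).trace.re * √D := by
    have := PosSemidef.one.norm_trace_mul_mul_conjTranspose_le Δᴴ (P * W * P)
    simp only [Matrix.mul_one, conjTranspose_conjTranspose] at this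
    exact hcompressed.trans (this.trans
      (mul_le_mul_of_nonneg_left (Real.sqrt_le_sqrt hD) (Real.sqrt_nonneg _)))
  exact sq_div_le_of_le_sqrt_mul_sqrt hr hCS
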